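/- Let f : [a,b] → ℝ be continuous and integrable on [a,b] with 0 ≤ a < b, and suppose f is quasi-convex on [a,b]. Then for any fixed p, q > 0, ∫_a^b (x-a)^p (b-x)^q f(x) dx ≤ (b-a)^{p+q+1} max{f(a), f(b)} β(p+1, q+1). -/

import Mathlib

open Real Set MeasureTheory intervalIntegral

noncomputable def beta (x y : ℝ) : ℝ := ∫ t in (0:ℝ)..1, t ^ (x-1) * (1-t) ^ (y-1)

def QuasiConvexOn' (s : Set ℝ) (g : ℝ → ℝ) : Prop :=
  ∀ x ∈ s, ∀ y ∈ s, ∀ lam ∈ Set.Icc (0:ℝ) 1, g (lam*x + (1-lam)*y) ≤ max (g x) (g y)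

/-! A quasi-convex function on `[a, b]` is bounded there by `M = max (f a) (f b)`, since every
point of `[a, b]` is a convex combination of the endpoints. The weight
`(x - a)^p (b - x)^q` is nonnegative, so the integral is at most `M` times the integral of the
weight, and the substitution `x = a + (b - a) t` turns the latter into
`(b - a)^(p+q+1) β(p+1, q+1)`. -/

theorem QuasiConvexOn'.le_max_of_mem_Icc {s : Set ℝ} {g : ℝ → ℝ} (hg : QuasiConvexOn' s g)
    {a b x : ℝ} (ha : a ∈ s) (hb : b ∈ s) (hx : x ∈ Icc a b) : g x ≤ max (g a) (g b) := by
  obtain ⟨hax, hxb⟩ := hx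
  rcases hax.eq_or_lt with rfl | hax_lt
  · exact le_max_left _ _
  have hba : 0 < b - a := by linarith
  have hlam : (b - x) / (b - a) ∈ Icc (0 : ℝ) 1 :=
    ⟨div_nonneg (by linarith) hba.le, (div_le_one hba).mpr (by linarith)⟩
  have hcomb : (b - x) / (b - a) * a + (1 - (b - x) / (b - a)) * b = x := by
    field_simp
    ring
  simpa only [hcomb] using hg a ha b hb _ hlam

theorem integral_sub_rpow_mul_sub_rpow {a b : ℝ} (hab : a < b) (p q : ℝ) :
    ∫ x in a..b, (x - a) ^ p * (b - x) ^ q = (b - a) ^ (p + q + 1) * beta (p + 1) (q + 1) := by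
  have hba : 0 < b - a := sub_pos.mpr hab
  have hsubst := integral_comp_mul_add (a := 0) (b := 1)
    (fun x => (x - a) ^ p * (b - x) ^ q) hba.ne' a
  simp only [mul_zero, zero_add, mul_one, sub_add_cancel, smul_eq_mul] at hsubst
  have hscale : ∀ t ∈ uIcc (0 : ℝ) 1,
      ((b - a) * t + a - a) ^ p * (b - ((b - a) * t + a)) ^ q
        = (b - a) ^ (p + q) * (t ^ (p + 1 - 1) * (1 - t) ^ (q + 1 - 1)) := by
    intro t ht
    rw [uIcc_of_le zero_le_one] at ht
    rw [show (b - a) * t + a - a = (b - a) * t by ring,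
      show b - ((b - a) * t + a) = (b - a) * (1 - t) by ring,
      mul_rpow hba.le ht.1, mul_rpow hba.le (by linarith [ht.2]), rpow_add hba,
      add_sub_cancel_right, add_sub_cancel_right]
    ring
  rw [integral_congr hscale, intervalIntegral.integral_const_mul] at hsubst
  change (b - a) ^ (p + q) * beta (p + 1) (q + 1) = _ at hsubst
  calc ∫ x in a..b, (x - a) ^ p * (b - x) ^ q
      = (b - a) * ((b - a)⁻¹ * ∫ x in a..b, (x - a) ^ p * (b - x) ^ q) := by field_simp
    _ = (b - a) ^ (p + q + 1) * beta (p + 1) (q + 1) := by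
        rw [← hsubst, rpow_add_one hba.ne']
        ring

theorem stmt16_general (a b p q : ℝ) (f : ℝ → ℝ)
    (hab : a < b) (hp : 0 < p) (hq : 0 < q)
    (hint : IntervalIntegrable f volume a b)
    (hf : QuasiConvexOn' (Set.Icc a b) f) :
    ∫ x in a..b, (x-a)^p * (b-x)^q * f x
      ≤ (b-a)^(p+q+1) * max (f a) (f b) * beta (p+1) (q+1) := by
  have hw : Continuous fun x : ℝ => (x - a) ^ p * (b - x) ^ q :=
    ((continuous_id.sub continuous_const).rpow_const fun _ => Or.inr hp.le).mul
      ((continuous_const.sub continuous_id).rpow_const fun _ => Or.inr hq.le)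
  have hbound : ∀ x ∈ Icc a b, (x - a) ^ p * (b - x) ^ q * f x
      ≤ (x - a) ^ p * (b - x) ^ q * max (f a) (f b) := fun x hx =>
    mul_le_mul_of_nonneg_left
      (hf.le_max_of_mem_Icc (left_mem_Icc.mpr hab.le) (right_mem_Icc.mpr hab.le) hx)
      (mul_nonneg (rpow_nonneg (sub_nonneg.mpr hx.1) p) (rpow_nonneg (sub_nonneg.mpr hx.2) q))
  calc ∫ x in a..b, (x - a) ^ p * (b - x) ^ q * f x
      ≤ ∫ x in a..b, (x - a) ^ p * (b - x) ^ q * max (f a) (f b) :=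
        integral_mono_on hab.le (hint.continuousOn_mul hw.continuousOn)
          ((hw.mul continuous_const).intervalIntegrable a b) hbound
    _ = (b - a) ^ (p + q + 1) * max (f a) (f b) * beta (p + 1) (q + 1) := by
        rw [intervalIntegral.integral_mul_const, integral_sub_rpow_mul_sub_rpow hab]
        ring

theorem stmt16 (a b p q : ℝ) (f : ℝ → ℝ)
    (ha : 0 ≤ a) (hab : a < b) (hp : 0 < p) (hq : 0 < q)
    (hcont : ContinuousOn f (Set.Icc a b))
    (hint : IntervalIntegrable f volume a b)
    (hf : QuasiConvexOn' (Set.Icc a b) f) :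
    ∫ x in a..b, (x-a)^p * (b-x)^q * f x
      ≤ (b-a)^(p+q+1) * max (f a) (f b) * beta (p+1) (q+1) :=
  stmt16_general a b p q f hab hp hq hint hf
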